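/- For any coordination strategy d, define beliefs recursively along an action sequence u₁,…,u_T by Π₁ = π₁ and Π_{t+1} = η(Π_t, d_t(u_{1:t-1}), u_t). Then for every t ∈ {1,…,T} and every action history u_{1:t} occurring with positive probability under d (and prior π₁), Π_{t+1}(m) equals the conditional probability that the mode profile is m given the observed actions u_{1:t}. In particular, the belief evolves according to the fixed transformation η, which does not depend on the coordination strategy d. -/

import Mathlib

open Finset

noncomputable section

/-- Likelihood `ℓ(γ,m,u) = ∏_i γ(m^i)^{u^i} (1-γ(m^i))^{1-u^i}`. -/
def ell {n : ℕ} {M : Type} (γ : M → ℝ) (m : Fin n → M) (u : Fin n → Bool) : ℝ :=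
  ∏ i : Fin n, if u i then γ (m i) else 1 - γ (m i)

/-- `P(u|π,γ) = Σ_m π(m) ℓ(γ,m,u)`. -/
def Pout {n : ℕ} {M : Type} [Fintype M]
    (π : (Fin n → M) → ℝ) (γ : M → ℝ) (u : Fin n → Bool) : ℝ :=
  ∑ m : Fin n → M, π m * ell γ m u

/-- The (strategy-independent) belief-update transformation
`η(π,γ,u)(m) = π(m) ℓ(γ,m,u) / P(u|π,γ)`. -/
def etaUpd {n : ℕ} {M : Type} [Fintype M]
    (π : (Fin n → M) → ℝ) (γ : M → ℝ) (u : Fin n → Bool) : (Fin n → M) → ℝ :=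
  fun m => π m * ell γ m u / Pout π γ u

/-- The prefix `u_{1:t-1}` of a full action sequence, at time `t`. -/
def pre {n T : ℕ} (u : Fin T → Fin n → Bool) (t : Fin T) : Fin t.1 → Fin n → Bool :=
  fun s => u ⟨s.1, s.2.trans t.2⟩

/-!
Bayesian updating commutes with normalisation: reweighting a normalised distribution
`w / ∑ w` by a likelihood `f` and normalising again gives the same result as reweighting `w`
itself. Hence, by induction on `t`, the recursively updated belief is the normalised product
of the prior with all likelihoods observed so far. The positivity of the final normaliser
propagates back to every earlier one because all likelihoods are nonnegative.
-/

theorem ell_nonneg {n : ℕ} {M : Type} {γ : M → ℝ} (hγ : ∀ a, γ a ∈ Set.Icc (0 : ℝ) 1)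
    (m : Fin n → M) (u : Fin n → Bool) : 0 ≤ ell γ m u :=
  Finset.prod_nonneg fun i _ => by
    obtain ⟨h0, h1⟩ := hγ (m i)
    split <;> linarith

section BeliefUpdate

variable {Ω : Type*} [Fintype Ω]

theorem div_sum_mul_div_sum (w f : Ω → ℝ) (hw : ∑ x, w x ≠ 0) (m : Ω) :
    w m / (∑ x, w x) * f m / ∑ x, w x / (∑ y, w y) * f x = w m * f m / ∑ x, w x * f x := by
  simp only [div_mul_eq_mul_div, ← Finset.sum_div]
  exact div_div_div_cancel_right₀ hw _ _

theorem sum_ne_zero_of_sum_mul_ne_zero {w f : Ω → ℝ} (hw : ∀ x, 0 ≤ w x)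
    (h : ∑ x, w x * f x ≠ 0) : ∑ x, w x ≠ 0 := by
  intro h0
  have hw0 := (Finset.sum_eq_zero_iff_of_nonneg fun x _ => hw x).1 h0
  exact h (Finset.sum_eq_zero fun x hx => by rw [hw0 x hx, zero_mul])

theorem Fin.Iio_eq_Iic_of_val_eq_succ {T : ℕ} {t s : Fin T} (h : t.1 = s.1 + 1) :
    Finset.Iio t = Finset.Iic s := by
  ext r
  simp only [Finset.mem_Iio, Finset.mem_Iic, Fin.lt_def, Fin.le_def]
  omega

theorem Fin.Iio_eq_empty_of_val_eq_zero {T : ℕ} {t : Fin T} (h : t.1 = 0) :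
    Finset.Iio t = ∅ := by
  ext r
  simp only [Finset.mem_Iio, Fin.lt_def, h, Finset.notMem_empty, iff_false]
  omega

theorem recursive_belief_eq_posterior {T : ℕ} (w : Ω → ℝ) (hw : ∀ m, 0 ≤ w m)
    (L : Fin T → Ω → ℝ) (hL : ∀ t m, 0 ≤ L t m) (b : ℕ → Ω → ℝ) (hb0 : b 0 = w)
    (hbs : ∀ (t : Fin T) m, b (t.1 + 1) m = b t.1 m * L t m / ∑ x, b t.1 x * L t x)
    (t : Fin T) (ht : ∑ m, w m * ∏ s ∈ Iic t, L s m ≠ 0) (m : Ω) :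
    b (t.1 + 1) m = w m * (∏ s ∈ Iic t, L s m) / ∑ x, w x * ∏ s ∈ Iic t, L s x := by
  obtain ⟨k, hk⟩ := t
  induction k generalizing m with
  | zero =>
    simp only [← Finset.prod_Iio_mul_eq_prod_Iic,
      Fin.Iio_eq_empty_of_val_eq_zero (rfl : (⟨0, hk⟩ : Fin T).1 = 0), Finset.prod_empty, one_mul]
    simpa only [hb0] using hbs ⟨0, hk⟩ m
  | succ k ih =>
    set s : Fin T := ⟨k, by omega⟩
    simp only [← Finset.prod_Iio_mul_eq_prod_Iic] at ht ⊢
    simp only [Fin.Iio_eq_Iic_of_val_eq_succ (t := ⟨k + 1, hk⟩) (s := s) rfl, ← mul_assoc] at ht ⊢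
    have hs : ∑ x, w x * ∏ r ∈ Iic s, L r x ≠ 0 :=
      sum_ne_zero_of_sum_mul_ne_zero (fun x => mul_nonneg (hw x)
        (Finset.prod_nonneg fun r _ => hL r x)) ht
    have hbk : b (k + 1) = fun x => w x * (∏ r ∈ Iic s, L r x) / ∑ y, w y * ∏ r ∈ Iic s, L r y :=
      funext fun x => ih x s.2 hs
    rw [show k + 1 + 1 = (⟨k + 1, hk⟩ : Fin T).1 + 1 from rfl, hbs, hbk]
    exact div_sum_mul_div_sum _ _ hs m

end BeliefUpdate

theorem coordinator_belief_is_posterior_general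
    (n T : ℕ)
    (M : Type) [Fintype M]
    (π₁ : (Fin n → M) → ℝ) (hπ0 : ∀ m, 0 ≤ π₁ m)
    (d : ∀ t : Fin T, (Fin t.1 → Fin n → Bool) → M → ℝ)
    (hd : ∀ t c a, d t c a ∈ Set.Icc (0 : ℝ) 1)
    (u : Fin T → Fin n → Bool)
    (b : ℕ → (Fin n → M) → ℝ)
    (hb0 : b 0 = π₁)
    (hbs : ∀ t : Fin T, b (t.1 + 1) = etaUpd (b t.1) (d t (pre u t)) (u t)) :
    ∀ t : Fin T,
      0 < ∑ m : Fin n → M, π₁ m * ∏ s ∈ Finset.Iic t, ell (d s (pre u s)) m (u s) →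
      ∀ m : Fin n → M,
        b (t.1 + 1) m =
          π₁ m * (∏ s ∈ Finset.Iic t, ell (d s (pre u s)) m (u s)) /
            ∑ m' : Fin n → M,
              π₁ m' * ∏ s ∈ Finset.Iic t, ell (d s (pre u s)) m' (u s) := by
  intro t ht m
  exact recursive_belief_eq_posterior π₁ hπ0 (fun s m => ell (d s (pre u s)) m (u s))
    (fun s m => ell_nonneg (hd s _) m (u s)) b hb0 (fun s m => by rw [hbs]; rfl) t ht.ne' m

/-- For any coordination strategy `d`, the beliefs defined recursively via the fixed
transformation `η` (i.e. `Π₁ = π₁`, `Π_{t+1} = η(Π_t, d_t(u_{1:t-1}), u_t)`) satisfy: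
for every `t` and every action history `u_{1:t}` of positive probability, `Π_{t+1}(m)`
is the conditional probability that the mode profile equals `m` given `u_{1:t}`. -/
theorem coordinator_belief_is_posterior
    (n T : ℕ) (hn : 1 ≤ n) (hT : 1 ≤ T)
    (M : Type) [Fintype M] [Nonempty M]
    (π₁ : (Fin n → M) → ℝ) (hπ0 : ∀ m, 0 ≤ π₁ m) (hπ1 : ∑ m : Fin n → M, π₁ m = 1)
    (d : ∀ t : Fin T, (Fin t.1 → Fin n → Bool) → M → ℝ)
    (hd : ∀ t c a, d t c a ∈ Set.Icc (0 : ℝ) 1)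
    (u : Fin T → Fin n → Bool)
    (b : ℕ → (Fin n → M) → ℝ)
    (hb0 : b 0 = π₁)
    (hbs : ∀ t : Fin T, b (t.1 + 1) = etaUpd (b t.1) (d t (pre u t)) (u t)) :
    ∀ t : Fin T,
      0 < ∑ m : Fin n → M, π₁ m * ∏ s ∈ Finset.Iic t, ell (d s (pre u s)) m (u s) →
      ∀ m : Fin n → M,
        b (t.1 + 1) m =
          π₁ m * (∏ s ∈ Finset.Iic t, ell (d s (pre u s)) m (u s)) /
            ∑ m' : Fin n → M,
              π₁ m' * ∏ s ∈ Finset.Iic t, ell (d s (pre u s)) m' (u s) :=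
  coordinator_belief_is_posterior_general n T M π₁ hπ0 d hd u b hb0 hbs
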